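/- Let {γ_i}_{i=1}^d be an IFS of proper contractions on a compact metric space K with K = ⋃ γ_i(K), and let B = B(γ_1,…,γ_d) be the set of branched points. If x ∈ K \ B, then there exists an open neighborhood U_x of x such that: (i) U_x ∩ B = ∅; (ii) for every i ∈ I(x) and every j ≠ i, γ_j(γ_i^{-1}(U_x)) ∩ U_x = ∅; (iii) for every i ∉ I(x), U_x ∩ γ_i(K) = ∅. -/

import Mathlib

/-!
A point `x` is branched exactly when `(x, x)` lies in the set of pairs `(γ i z, γ j z)` with
`i ≠ j`. For continuous maps on a compact space this set is a finite union of compact sets, hence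
closed, so a non-branched `x` has a neighbourhood `U` with `U ×ˢ U` disjoint from it; this gives
(i) and (ii) at once. Likewise the ranges `γ i (K)` are closed, so a small `U` misses those
that do not contain `x`, which is (iii).
-/

open Set Filter Topology

section BranchPairs

variable {ι X Y : Type*}

def branchPairs (γ : ι → X → Y) : Set (Y × Y) :=
  ⋃ (i) (j) (_ : i ≠ j), range fun z => (γ i z, γ j z)

theorem mem_branchPairs_of_ne {γ : ι → X → Y} {i j : ι} (hij : i ≠ j) (z : X) :
    (γ i z, γ j z) ∈ branchPairs γ :=
  mem_iUnion.2 ⟨i, mem_iUnion.2 ⟨j, mem_iUnion.2 ⟨hij, z, rfl⟩⟩⟩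

variable [TopologicalSpace X] [TopologicalSpace Y] [Finite ι] [CompactSpace X] [T2Space Y]
  {γ : ι → X → Y}

theorem isClosed_branchPairs (hγ : ∀ i, Continuous (γ i)) : IsClosed (branchPairs γ) :=
  (isCompact_iUnion fun i => isCompact_iUnion fun j => isCompact_iUnion fun _ =>
    isCompact_range ((hγ i).prodMk (hγ j))).isClosed

theorem eventually_notMem_range_of_notMem (hγ : ∀ i, Continuous (γ i)) (y : Y) :
    ∀ᶠ w in 𝓝 y, ∀ i, y ∉ range (γ i) → w ∉ range (γ i) :=
  eventually_all.2 fun i => eventually_imp_distrib_left.2 fun hi =>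
    (isCompact_range (hγ i)).isClosed.compl_mem_nhds hi

theorem exists_isOpen_separating_of_notMem_branchPairs (hγ : ∀ i, Continuous (γ i)) {y : Y}
    (hy : (y, y) ∉ branchPairs γ) :
    ∃ U : Set Y, IsOpen U ∧ y ∈ U ∧
      (∀ i j, i ≠ j → ∀ z, γ i z ∈ U → γ j z ∉ U) ∧
      ∀ i, y ∉ range (γ i) → Disjoint U (range (γ i)) := by
  have hpairs : ∀ᶠ p in 𝓝 y ×ˢ 𝓝 y, p ∉ branchPairs γ := by
    rw [← nhds_prod_eq]
    exact (isClosed_branchPairs hγ).compl_mem_nhds hy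
  obtain ⟨t, ht, hsep⟩ :=
    (eventually_prod_self_iff (r := fun a b => (a, b) ∉ branchPairs γ)).1 hpairs
  obtain ⟨U, hUsub, hUopen, hyU⟩ :=
    mem_nhds_iff.1 (inter_mem ht (eventually_notMem_range_of_notMem hγ y))
  refine ⟨U, hUopen, hyU, fun i j hij z hi hj => ?_, fun i hi => ?_⟩
  · exact hsep _ (hUsub hi).1 _ (hUsub hj).1 (mem_branchPairs_of_ne hij z)
  · exact disjoint_left.2 fun w hw => (hUsub hw).2 i hi

end BranchPairs

theorem ifs_separation_lemma_general
    {K : Type*} [MetricSpace K] [CompactSpace K]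
    (d : ℕ) (γ : Fin d → K → K)
    (c₂ : ℝ)
    (hup : ∀ i x y, dist (γ i x) (γ i y) ≤ c₂ * dist x y)
    (B : Set K) (hB : B = {x : K | ∃ y : K, ∃ i j : Fin d, i ≠ j ∧ γ i y = x ∧ γ j y = x})
    (x : K) (hx : x ∉ B) :
    ∃ U : Set K, IsOpen U ∧ x ∈ U ∧
      U ∩ B = ∅ ∧
      (∀ i : Fin d, x ∈ Set.range (γ i) →
        ∀ j : Fin d, j ≠ i → (γ j '' (γ i ⁻¹' U)) ∩ U = ∅) ∧
      (∀ i : Fin d, x ∉ Set.range (γ i) → U ∩ Set.range (γ i) = ∅) := by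
  have hγ : ∀ i, Continuous (γ i) := fun i => (LipschitzWith.of_dist_le' (hup i)).continuous
  have hxx : (x, x) ∉ branchPairs γ := by
    simp only [branchPairs, mem_iUnion, mem_range, Prod.mk.injEq]
    rintro ⟨i, j, hij, z, hi, hj⟩
    exact hx (hB ▸ ⟨z, i, j, hij, hi, hj⟩)
  obtain ⟨U, hUopen, hxU, hsep, hrange⟩ :=
    exists_isOpen_separating_of_notMem_branchPairs hγ hxx
  refine ⟨U, hUopen, hxU, ?_, ?_, fun i hi => disjoint_iff_inter_eq_empty.1 (hrange i hi)⟩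
  · refine eq_empty_of_forall_notMem fun w ⟨hwU, hwB⟩ => ?_
    obtain ⟨z, i, j, hij, rfl, hj⟩ := hB ▸ hwB
    exact hsep i j hij z hwU (hj ▸ hwU)
  · rintro i - j hji
    refine eq_empty_of_forall_notMem fun w ⟨⟨z, hz, hzw⟩, hwU⟩ => ?_
    exact hsep i j hji.symm z hz (hzw ▸ hwU)

/-- the separation lemma for a non-branched point `x` of an IFS of proper
contractions on a compact metric space `K` (here the whole space) with `K = ⋃ γ i (K)`. -/
theorem ifs_separation_lemma
    {K : Type*} [MetricSpace K] [CompactSpace K]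
    (d : ℕ) (γ : Fin d → K → K)
    (c₁ c₂ : ℝ) (hc₁ : 0 < c₁) (hc₁₂ : c₁ ≤ c₂) (hc₂ : c₂ < 1)
    (hlow : ∀ i x y, c₁ * dist x y ≤ dist (γ i x) (γ i y))
    (hup : ∀ i x y, dist (γ i x) (γ i y) ≤ c₂ * dist x y)
    (hss : (Set.univ : Set K) = ⋃ i, Set.range (γ i))
    (B : Set K) (hB : B = {x : K | ∃ y : K, ∃ i j : Fin d, i ≠ j ∧ γ i y = x ∧ γ j y = x})
    (x : K) (hx : x ∉ B) :
    ∃ U : Set K, IsOpen U ∧ x ∈ U ∧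
      U ∩ B = ∅ ∧
      (∀ i : Fin d, x ∈ Set.range (γ i) →
        ∀ j : Fin d, j ≠ i → (γ j '' (γ i ⁻¹' U)) ∩ U = ∅) ∧
      (∀ i : Fin d, x ∉ Set.range (γ i) → U ∩ Set.range (γ i) = ∅) :=
  ifs_separation_lemma_general d γ c₂ hup B hB x hx
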